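/- arXiv:1501.01453 — 2 statements merged into one kernel-verified Lean document; each statement's English description precedes it below -/
import Mathlib

section
/- Let (Ω, 𝓕) be a measurable space and let c : 𝓕 → [0,1] be a monotone, normalized, submodular set function. Then the Choquet integral with respect to c is subadditive: for all bounded Borel-measurable X, Y : Ω → ℝ, ∫(X + Y) dc ≤ ∫X dc + ∫Y dc. -/
/-!
Adding `s • 1_B` (with `s ≥ 0`) to a bounded `Z` raises the Choquet integral by at most
`s * c B`: the level set `{Z + s • 1_B > t}` is the union of `{Z > t - s} ∩ B` and `{Z > t}`,
whose intersection is `{Z > t} ∩ B`, so submodularity bounds its capacity, and the correction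
`c ({Z > t - s} ∩ B) - c ({Z > t} ∩ B)` integrates to exactly `s * c B`.
Up to an additive constant, `Y` lies below a staircase `∑ j, ε • 1_{Y > t_j}` with step `ε` and
`t_{j+1} = t_j + ε`. Iterating the one-step bound controls the integral of `X` plus the
staircase by `∫ X dc + ∑ j, ε * c (Y > t_j)`, and this sum is a lower Riemann sum of
`∫ Y dc`, so `∫ (X + Y) dc ≤ ∫ X dc + ∫ Y dc + ε` for every `ε > 0`.
-/

open MeasureTheory Set

/-- The Choquet integral of `X` with respect to the set function `c`:
`∫ X dc = ∫_{-∞}^0 (c(X > x) - 1) dx + ∫_0^∞ c(X > x) dx`. -/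
noncomputable def choquet {Ω : Type*} [MeasurableSpace Ω] (c : Set Ω → ℝ) (X : Ω → ℝ) : ℝ :=
  (∫ x in Set.Iio (0 : ℝ), (c {ω | x < X ω} - 1)) + ∫ x in Set.Ioi (0 : ℝ), c {ω | x < X ω}

theorem setIntegral_Iio_sub_one_add_setIntegral_Ioi {f : ℝ → ℝ} {a b : ℝ} (ha : a ≤ 0)
    (hb : 0 ≤ b) (hf : IntervalIntegrable f volume a b) (hfa : ∀ t < a, f t = 1)
    (hfb : ∀ t, b < t → f t = 0) :
    (∫ t in Iio 0, (f t - 1)) + ∫ t in Ioi 0, f t = (∫ t in a..b, f t) + a := by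
  have hlow : ∫ t in Iio 0, (f t - 1) = ∫ t in a..0, (f t - 1) := by
    rw [setIntegral_eq_of_subset_of_forall_sdiff_eq_zero measurableSet_Iio
      (show Ico a 0 ⊆ Iio 0 from Ico_subset_Iio_self)
      (fun t ⟨h0, h⟩ => by rw [hfa t (not_le.1 fun hat => h ⟨hat, h0⟩), sub_self]),
      integral_Ico_eq_integral_Ioo, ← integral_Ioc_eq_integral_Ioo,
      intervalIntegral.integral_of_le ha]
  have hhigh : ∫ t in Ioi 0, f t = ∫ t in (0 : ℝ)..b, f t := by
    rw [setIntegral_eq_of_subset_of_forall_sdiff_eq_zero measurableSet_Ioi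
      (show Ioc 0 b ⊆ Ioi 0 from Ioc_subset_Ioi_self)
      (fun t ⟨h0, h⟩ => hfb t (not_le.1 fun htb => h ⟨h0, htb⟩)),
      intervalIntegral.integral_of_le hb]
  have hfa0 : IntervalIntegrable f volume a 0 :=
    hf.mono_set (uIcc_subset_uIcc left_mem_uIcc (mem_uIcc_of_le ha hb))
  have hf0b : IntervalIntegrable f volume 0 b :=
    hf.mono_set (uIcc_subset_uIcc (mem_uIcc_of_le ha hb) right_mem_uIcc)
  rw [hlow, hhigh, intervalIntegral.integral_sub hfa0 intervalIntegrable_const,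
    intervalIntegral.integral_const, ← intervalIntegral.integral_add_adjacent_intervals hfa0 hf0b,
    smul_eq_mul, mul_one]
  ring

theorem intervalIntegral_comp_sub_right_sub {f : ℝ → ℝ}
    (hf : ∀ u v, IntervalIntegrable f volume u v) {a b s C : ℝ}
    (ha : ∀ t ∈ uIcc (a - s) a, f t = C) (hb : ∀ t ∈ uIcc (b - s) b, f t = 0) :
    (∫ t in a..b, f (t - s)) - ∫ t in a..b, f t = s * C := by
  rw [intervalIntegral.integral_comp_sub_right,
    intervalIntegral.integral_interval_sub_interval_comm (hf _ _) (hf _ _) (hf _ _),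
    intervalIntegral.integral_congr ha, intervalIntegral.integral_congr hb]
  simp

open Finset in
theorem Antitone.sum_mul_le_intervalIntegral {f : ℝ → ℝ} (hf : Antitone f) {ε : ℝ} (hε : 0 ≤ ε)
    (a : ℝ) (n : ℕ) :
    ∑ j ∈ range n, ε * f (a + ε * (j + 1)) ≤ ∫ t in a..a + ε * n, f t := by
  have hF : AntitoneOn (fun u => f (a + ε * u)) (Icc 0 (0 + n)) :=
    fun u _ v _ huv => hf (by gcongr)
  have := mul_le_mul_of_nonneg_left hF.sum_le_integral hε
  rw [← smul_eq_mul (a := ε) (b := ∫ _ in _.._, _), intervalIntegral.smul_integral_comp_add_mul,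
    mul_sum] at this
  simpa using this

open Finset in
theorem min_le_add_sum_indicator_Ioi (a ε y : ℝ) (n : ℕ) :
    min y (a + ε * (n + 1)) ≤
      a + ε + ∑ j ∈ range n, (Ioi (a + ε * (j + 1))).indicator (fun _ => ε) y := by
  induction n with
  | zero => simp
  | succ n ih =>
    rw [sum_range_succ]
    push_cast
    by_cases hy : y ∈ Ioi (a + ε * (n + 1))
    · rw [min_eq_right (le_of_lt hy)] at ih
      rw [indicator_of_mem hy]
      linarith [min_le_right y (a + ε * (n + 1 + 1))]
    · rw [min_eq_left (not_lt.1 hy)] at ih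
      rw [indicator_of_notMem hy]
      linarith [min_le_left y (a + ε * (n + 1 + 1))]

section

variable {Ω : Type*}

theorem setOf_lt_add_indicator {Z : Ω → ℝ} {B : Set Ω} {s : ℝ} (hs : 0 ≤ s) (t : ℝ) :
    {ω | t < Z ω + B.indicator (fun _ => s) ω} = ({ω | t - s < Z ω} ∩ B) ∪ {ω | t < Z ω} := by
  ext ω
  by_cases hω : ω ∈ B
  · simpa [hω, sub_lt_iff_lt_add] using fun h => lt_add_of_lt_of_nonneg h hs
  · simp [hω]

theorem setOf_sub_lt_inter_inter_setOf_lt {Z : Ω → ℝ} {B : Set Ω} {s : ℝ} (hs : 0 ≤ s)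
    (t : ℝ) : ({ω | t - s < Z ω} ∩ B) ∩ {ω | t < Z ω} = {ω | t < Z ω} ∩ B := by
  ext ω
  constructor
  · rintro ⟨⟨-, hB⟩, ht⟩
    exact ⟨ht, hB⟩
  · rintro ⟨ht, hB⟩
    exact ⟨⟨lt_of_le_of_lt (sub_le_self t hs) ht, hB⟩, ht⟩

theorem abs_sum_indicator_le (B : ℕ → Set Ω) {s : ℝ} (hs : 0 ≤ s) (n : ℕ) (ω : Ω) :
    |∑ j ∈ Finset.range n, (B j).indicator (fun _ => s) ω| ≤ n * s := by
  rw [abs_of_nonneg (Finset.sum_nonneg fun j _ => indicator_nonneg (fun _ _ => hs) ω)]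
  calc _ ≤ ∑ _j ∈ Finset.range n, s :=
        Finset.sum_le_sum fun j _ => indicator_le_self' (fun _ _ => hs) ω
    _ = n * s := by simp

theorem le_sum_indicator_setOf_lt_add {Y : Ω → ℝ} {a ε : ℝ} {n : ℕ} {ω : Ω}
    (hY : Y ω ≤ a + ε * (n + 1)) :
    Y ω ≤ ∑ j ∈ Finset.range n, {ω | a + ε * (j + 1) < Y ω}.indicator (fun _ => ε) ω + (a + ε) := by
  have := min_le_add_sum_indicator_Ioi a ε (Y ω) n
  rw [min_eq_left hY] at this
  exact this.trans_eq (by rw [add_comm]; rfl)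

variable [MeasurableSpace Ω]

structure IsCapacity (c : Set Ω → ℝ) : Prop where
  mono : ∀ ⦃A B : Set Ω⦄, MeasurableSet A → MeasurableSet B → A ⊆ B → c A ≤ c B
  map_empty : c ∅ = 0
  map_univ : c univ = 1

def IsSubmodular (c : Set Ω → ℝ) : Prop :=
  ∀ A B : Set Ω, MeasurableSet A → MeasurableSet B → c (A ∪ B) + c (A ∩ B) ≤ c A + c B

variable {c : Set Ω → ℝ} {Z W : Ω → ℝ}

theorem IsSubmodular.apply_setOf_lt_add_indicator_le (hsub : IsSubmodular c)
    (hZ : Measurable Z) {B : Set Ω} (hB : MeasurableSet B) {s : ℝ} (hs : 0 ≤ s) (t : ℝ) :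
    c {ω | t < Z ω + B.indicator (fun _ => s) ω} + c ({ω | t < Z ω} ∩ B) ≤
      c {ω | t < Z ω} + c ({ω | t - s < Z ω} ∩ B) := by
  have := hsub ({ω | t - s < Z ω} ∩ B) {ω | t < Z ω}
    ((measurableSet_lt measurable_const hZ).inter hB) (measurableSet_lt measurable_const hZ)
  rw [← setOf_lt_add_indicator hs, setOf_sub_lt_inter_inter_setOf_lt hs] at this
  linarith

namespace IsCapacity

theorem antitone_setOf_lt_inter (hc : IsCapacity c) (hZ : Measurable Z) {B : Set Ω}
    (hB : MeasurableSet B) : Antitone fun t => c ({ω | t < Z ω} ∩ B) :=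
  fun _ _ hst => hc.mono ((measurableSet_lt measurable_const hZ).inter hB)
    ((measurableSet_lt measurable_const hZ).inter hB)
    (inter_subset_inter_left _ fun _ h => lt_of_le_of_lt hst h)

theorem antitone_setOf_lt (hc : IsCapacity c) (hZ : Measurable Z) :
    Antitone fun t => c {ω | t < Z ω} := by
  simpa using hc.antitone_setOf_lt_inter hZ MeasurableSet.univ

theorem choquet_eq_intervalIntegral_add (hc : IsCapacity c) (hZ : Measurable Z) {a b : ℝ}
    (ha : a ≤ 0) (hb : 0 ≤ b) (hZab : ∀ ω, Z ω ∈ Icc a b) :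
    choquet c Z = (∫ t in a..b, c {ω | t < Z ω}) + a :=
  setIntegral_Iio_sub_one_add_setIntegral_Ioi ha hb (hc.antitone_setOf_lt hZ).intervalIntegrable
    (fun t ht => by
      rw [show {ω | t < Z ω} = univ from eq_univ_of_forall fun ω => ht.trans_le (hZab ω).1,
        hc.map_univ])
    (fun t ht => by
      rw [show {ω | t < Z ω} = ∅ from eq_empty_of_forall_notMem fun ω h =>
        lt_asymm ht (lt_of_lt_of_le h (hZab ω).2), hc.map_empty])

theorem choquet_mono (hc : IsCapacity c) (hZ : Measurable Z) (hW : Measurable W)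
    (hZb : ∃ M, ∀ ω, |Z ω| ≤ M) (hWb : ∃ M, ∀ ω, |W ω| ≤ M) (hZW : ∀ ω, Z ω ≤ W ω) :
    choquet c Z ≤ choquet c W := by
  obtain ⟨M, hM⟩ := hZb
  obtain ⟨M', hM'⟩ := hWb
  set L := |M| + |M'|
  have hL : 0 ≤ L := by positivity
  have hML : M ≤ L := by linarith [le_abs_self M, abs_nonneg M']
  have hM'L : M' ≤ L := by linarith [le_abs_self M', abs_nonneg M]
  rw [hc.choquet_eq_intervalIntegral_add hZ (neg_nonpos.2 hL) hL
      fun ω => abs_le.1 ((hM ω).trans hML),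
    hc.choquet_eq_intervalIntegral_add hW (neg_nonpos.2 hL) hL
      fun ω => abs_le.1 ((hM' ω).trans hM'L)]
  gcongr ?_ + _
  exact intervalIntegral.integral_mono_on (by linarith)
    (hc.antitone_setOf_lt hZ).intervalIntegrable (hc.antitone_setOf_lt hW).intervalIntegrable
    fun t _ => hc.mono (measurableSet_lt measurable_const hZ)
      (measurableSet_lt measurable_const hW) fun ω h => lt_of_lt_of_le h (hZW ω)

theorem choquet_add_const (hc : IsCapacity c) (hZ : Measurable Z) (hZb : ∃ M, ∀ ω, |Z ω| ≤ M)
    (r : ℝ) : choquet c (fun ω => Z ω + r) = choquet c Z + r := by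
  obtain ⟨M, hM⟩ := hZb
  have hZ' (ω : Ω) : -|M| ≤ Z ω ∧ Z ω ≤ |M| := abs_le.1 ((hM ω).trans (le_abs_self M))
  have hr₁ := neg_abs_le r
  have hr₂ := le_abs_self r
  have hM₀ := abs_nonneg M
  set L := |M| + |r| with hL_def
  have hL : 0 ≤ L := by positivity
  have hlevel (t : ℝ) : {ω | t < Z ω + r} = {ω | t - r < Z ω} := by
    ext ω
    simp [sub_lt_iff_lt_add]
  rw [hc.choquet_eq_intervalIntegral_add (hZ.add_const r) (neg_nonpos.2 hL) hL
      fun ω => ⟨by linarith [hZ' ω], by linarith [hZ' ω]⟩,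
    hc.choquet_eq_intervalIntegral_add hZ (a := -L - r) (b := L - r) (by linarith)
      (by linarith) fun ω => ⟨by linarith [hZ' ω], by linarith [hZ' ω]⟩]
  simp_rw [hlevel, intervalIntegral.integral_comp_sub_right (fun t => c {ω | t < Z ω})]
  ring

theorem intervalIntegral_setOf_sub_lt_inter_sub (hc : IsCapacity c) (hZ : Measurable Z)
    {M : ℝ} (hM : ∀ ω, |Z ω| ≤ M) {B : Set Ω} (hB : MeasurableSet B) {s L : ℝ} (hs : 0 ≤ s)
    (hL : M + s < L) :
    (∫ t in (-L)..L, c ({ω | t - s < Z ω} ∩ B)) - ∫ t in (-L)..L, c ({ω | t < Z ω} ∩ B) =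
      s * c B := by
  refine intervalIntegral_comp_sub_right_sub (f := fun t => c ({ω | t < Z ω} ∩ B))
    (fun u v => (hc.antitone_setOf_lt_inter hZ hB).intervalIntegrable) (fun t ht => ?_)
    (fun t ht => ?_)
  · rw [uIcc_of_le (by linarith)] at ht
    rw [show {ω | t < Z ω} = univ from eq_univ_of_forall fun ω =>
      show t < Z ω by linarith [ht.2, (abs_le.1 (hM ω)).1], univ_inter]
  · rw [uIcc_of_le (by linarith)] at ht
    rw [show {ω | t < Z ω} = ∅ from eq_empty_of_forall_notMem fun ω (h : t < Z ω) => by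
      linarith [ht.1, (abs_le.1 (hM ω)).2], empty_inter, hc.map_empty]

theorem choquet_add_indicator_le (hc : IsCapacity c) (hsub : IsSubmodular c)
    (hZ : Measurable Z) (hZb : ∃ M, ∀ ω, |Z ω| ≤ M) {B : Set Ω} (hB : MeasurableSet B) {s : ℝ}
    (hs : 0 ≤ s) :
    choquet c (fun ω => Z ω + B.indicator (fun _ => s) ω) ≤ choquet c Z + s * c B := by
  obtain ⟨M, hM⟩ := hZb
  have hZ' (ω : Ω) : -|M| ≤ Z ω ∧ Z ω ≤ |M| := abs_le.1 ((hM ω).trans (le_abs_self M))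
  set L := |M| + s + 1 with hL_def
  have hL : 0 ≤ L := by positivity
  set g : ℝ → ℝ := fun t => c ({ω | t < Z ω} ∩ B)
  have hg : Antitone g := hc.antitone_setOf_lt_inter hZ hB
  have hgs : Antitone fun t => g (t - s) := fun _ _ h => hg (sub_le_sub_right h s)
  have hZB : Measurable fun ω => Z ω + B.indicator (fun _ => s) ω :=
    hZ.add (measurable_const.indicator hB)
  have hS := (hc.antitone_setOf_lt hZ).intervalIntegrable (μ := volume) (a := -L) (b := L)
  have hS' := (hc.antitone_setOf_lt hZB).intervalIntegrable (μ := volume) (a := -L) (b := L)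
  have hshift : (∫ t in (-L)..L, g (t - s)) - ∫ t in (-L)..L, g t = s * c B :=
    hc.intervalIntegral_setOf_sub_lt_inter_sub hZ hM hB hs (by linarith [le_abs_self M])
  have hint := intervalIntegral.integral_mono_on (μ := volume) (neg_le_self hL)
    (hS'.add hg.intervalIntegrable) (hS.add hgs.intervalIntegrable)
    fun t _ => hsub.apply_setOf_lt_add_indicator_le hZ hB hs t
  rw [intervalIntegral.integral_add hS' hg.intervalIntegrable,
    intervalIntegral.integral_add hS hgs.intervalIntegrable] at hint
  have hB₀ (ω : Ω) : 0 ≤ B.indicator (fun _ => s) ω := indicator_nonneg (fun _ _ => hs) ω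
  have hB₁ (ω : Ω) : B.indicator (fun _ => s) ω ≤ s := indicator_le_self' (fun _ _ => hs) ω
  rw [hc.choquet_eq_intervalIntegral_add hZB (neg_nonpos.2 hL) hL
      fun ω => ⟨by linarith [hZ' ω, hB₀ ω], by linarith [hZ' ω, hB₁ ω]⟩,
    hc.choquet_eq_intervalIntegral_add hZ (neg_nonpos.2 hL) hL
      fun ω => ⟨by linarith [hZ' ω], by linarith [hZ' ω]⟩]
  linarith

open Finset in
theorem choquet_add_sum_indicator_le (hc : IsCapacity c) (hsub : IsSubmodular c)
    (hZ : Measurable Z) (hZb : ∃ M, ∀ ω, |Z ω| ≤ M) {B : ℕ → Set Ω}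
    (hB : ∀ j, MeasurableSet (B j)) {s : ℝ} (hs : 0 ≤ s) (n : ℕ) :
    choquet c (fun ω => Z ω + ∑ j ∈ range n, (B j).indicator (fun _ => s) ω) ≤
      choquet c Z + ∑ j ∈ range n, s * c (B j) := by
  induction n with
  | zero => simp
  | succ n ih =>
    obtain ⟨M, hM⟩ := hZb
    have := hc.choquet_add_indicator_le hsub
      (Z := fun ω => Z ω + ∑ j ∈ range n, (B j).indicator (fun _ => s) ω) (by measurability)
      ⟨M + n * s, fun ω => (abs_add_le _ _).trans
        (add_le_add (hM ω) (abs_sum_indicator_le B hs n ω))⟩ (hB n) hs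
    simp only [sum_range_succ, ← add_assoc]
    linarith

theorem sum_mul_le_choquet_sub (hc : IsCapacity c) (hZ : Measurable Z) {a ε : ℝ} (hε : 0 ≤ ε)
    {n : ℕ} (ha : a ≤ 0) (hb : 0 ≤ a + ε * n) (hZab : ∀ ω, Z ω ∈ Icc a (a + ε * n)) :
    ∑ j ∈ Finset.range n, ε * c {ω | a + ε * (j + 1) < Z ω} ≤ choquet c Z - a := by
  rw [hc.choquet_eq_intervalIntegral_add hZ ha hb hZab, add_sub_cancel_right]
  exact (hc.antitone_setOf_lt hZ).sum_mul_le_intervalIntegral hε a n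

open Finset in
theorem choquet_add_le_choquet_add_choquet_add (hc : IsCapacity c) (hsub : IsSubmodular c)
    {X Y : Ω → ℝ} (hX : Measurable X) (hY : Measurable Y) (hXb : ∃ M, ∀ ω, |X ω| ≤ M) {M : ℝ}
    (hM : ∀ ω, |Y ω| ≤ M) {ε : ℝ} (hε : 0 < ε) :
    choquet c (fun ω => X ω + Y ω) ≤ choquet c X + choquet c Y + ε := by
  obtain ⟨MX, hMX⟩ := hXb
  obtain ⟨N, hN⟩ := exists_nat_ge (|M| / ε)
  rw [div_le_iff₀ hε] at hN
  have hM₀ := abs_nonneg M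
  have hY' (ω : Ω) : -|M| ≤ Y ω ∧ Y ω ≤ |M| := abs_le.1 ((hM ω).trans (le_abs_self M))
  -- the grid `a + ε * j`, `j ≤ n + 1`, starts below `-|M|` and ends above `|M|`
  set a := -(ε * (N + 1)) with ha_def
  set n := 2 * N + 1 with hn_def
  have hn : (n : ℝ) = 2 * N + 1 := by push_cast [hn_def]; ring
  set B : ℕ → Set Ω := fun j => {ω | a + ε * (j + 1) < Y ω}
  set W : Ω → ℝ := fun ω => ∑ j ∈ range n, (B j).indicator (fun _ => ε) ω
  have hW : Measurable W := by measurability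
  have hYW (ω : Ω) : Y ω ≤ W ω + (a + ε) :=
    le_sum_indicator_setOf_lt_add (by rw [hn]; linarith [(hY' ω).2])
  have hXW : ∀ ω, |X ω + W ω| ≤ MX + n * ε := fun ω =>
    (abs_add_le _ _).trans (add_le_add (hMX ω) (abs_sum_indicator_le B hε.le n ω))
  calc choquet c (fun ω => X ω + Y ω)
      ≤ choquet c (fun ω => X ω + W ω + (a + ε)) :=
        hc.choquet_mono (hX.add hY) ((hX.add hW).add_const _)
          ⟨MX + M, fun ω => (abs_add_le _ _).trans (add_le_add (hMX ω) (hM ω))⟩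
          ⟨MX + n * ε + |a + ε|, fun ω => (abs_add_le _ _).trans (add_le_add (hXW ω) le_rfl)⟩
          fun ω => by linarith [hYW ω]
    _ = choquet c (fun ω => X ω + W ω) + (a + ε) :=
        hc.choquet_add_const (hX.add hW) ⟨_, hXW⟩ _
    _ ≤ choquet c X + ∑ j ∈ range n, ε * c (B j) + (a + ε) := by
        gcongr
        exact hc.choquet_add_sum_indicator_le hsub hX ⟨MX, hMX⟩
          (fun j => measurableSet_lt measurable_const hY) hε.le n
    _ ≤ choquet c X + (choquet c Y - a) + (a + ε) := by
        gcongr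
        exact hc.sum_mul_le_choquet_sub hY hε.le (by linarith) (by rw [hn]; linarith)
          fun ω => ⟨by linarith [(hY' ω).1], by rw [hn]; linarith [(hY' ω).2]⟩
    _ = choquet c X + choquet c Y + ε := by ring

end IsCapacity

end

theorem choquet_subadditive_of_submodular_general {Ω : Type*} [MeasurableSpace Ω] (c : Set Ω → ℝ)
    (hc_mono : ∀ ⦃A B : Set Ω⦄, MeasurableSet A → MeasurableSet B → A ⊆ B → c A ≤ c B)
    (hc_empty : c ∅ = 0) (hc_univ : c Set.univ = 1)
    (hc_submod : ∀ A B : Set Ω, MeasurableSet A → MeasurableSet B →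
        c (A ∪ B) + c (A ∩ B) ≤ c A + c B)
    (X Y : Ω → ℝ) (hX : Measurable X) (hY : Measurable Y)
    (hXb : ∃ M, ∀ ω, |X ω| ≤ M) (hYb : ∃ M, ∀ ω, |Y ω| ≤ M) :
    choquet c (fun ω => X ω + Y ω) ≤ choquet c X + choquet c Y := by
  obtain ⟨M, hM⟩ := hYb
  refine le_of_forall_pos_le_add fun ε hε => ?_
  exact IsCapacity.choquet_add_le_choquet_add_choquet_add ⟨hc_mono, hc_empty, hc_univ⟩
    hc_submod hX hY hXb hM hε

/-- If the monotone normalized set function `c` is submodular, then the Choquet integral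
is subadditive on bounded Borel-measurable functions. -/
theorem choquet_subadditive_of_submodular {Ω : Type*} [MeasurableSpace Ω] (c : Set Ω → ℝ)
    (hc_mono : ∀ ⦃A B : Set Ω⦄, MeasurableSet A → MeasurableSet B → A ⊆ B → c A ≤ c B)
    (hc_range : ∀ A : Set Ω, MeasurableSet A → c A ∈ Set.Icc (0 : ℝ) 1)
    (hc_empty : c ∅ = 0) (hc_univ : c Set.univ = 1)
    (hc_submod : ∀ A B : Set Ω, MeasurableSet A → MeasurableSet B →
        c (A ∪ B) + c (A ∩ B) ≤ c A + c B)
    (X Y : Ω → ℝ) (hX : Measurable X) (hY : Measurable Y)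
    (hXb : ∃ M, ∀ ω, |X ω| ≤ M) (hYb : ∃ M, ∀ ω, |Y ω| ≤ M) :
    choquet c (fun ω => X ω + Y ω) ≤ choquet c X + choquet c Y :=
  choquet_subadditive_of_submodular_general c hc_mono hc_empty hc_univ hc_submod X Y hX hY hXb hYb
end

section
/- Let (Ω, 𝓕) be a measurable space and let c : 𝓕 → [0,1] be a monotone, normalized, submodular set function. For every p ∈ ℕ and all measurable X, Y : Ω → ℝ taking values in {0, 1, …, 2^p}, one has ∫(X + Y) dc ≤ ∫X dc + ∫Y dc. -/
open MeasureTheory Set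

/-!
For `ℕ`-valued `X` the Choquet integral is the finite sum `∑ₖ c {X > k}` of capacities of level
sets. Subadditivity then follows by induction on the bound of `Y`: writing `Y = Y' + 1_B` with
`B = {Y > 0}`, the level sets of `H + 1_B` are `{H > k} ∪ ({H ≥ k} ∩ B)`, and submodularity
applied to each of them telescopes along the decreasing chain `{H ≥ k}` to
`∑ₖ c {H + 1_B > k} ≤ ∑ₖ c {H > k} + c B`.
-/

section StepFunction

theorem eqOn_comp_natFloor_Ico {α : Type*} (φ : ℕ → α) (k : ℕ) :
    EqOn (fun x : ℝ => φ ⌊x⌋₊) (fun _ => φ k) (Ico (k : ℝ) (k + 1)) :=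
  fun x hx => congrArg φ (Nat.floor_eq_on_Ico k x hx)

variable {E : Type*} [NormedAddCommGroup E]

theorem intervalIntegrable_comp_natFloor (φ : ℕ → E) (k : ℕ) :
    IntervalIntegrable (fun x : ℝ => φ ⌊x⌋₊) volume k (k + 1) :=
  (intervalIntegrable_iff_integrableOn_Ico_of_le (by linarith)).2
    ((integrableOn_const (by simp)).congr_fun (eqOn_comp_natFloor_Ico φ k).symm
      measurableSet_Ico)

theorem intervalIntegral_comp_natFloor [NormedSpace ℝ E] [CompleteSpace E] (φ : ℕ → E)
    (k : ℕ) :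
    ∫ x in (k : ℝ)..k + 1, φ ⌊x⌋₊ = φ k := by
  rw [intervalIntegral.integral_of_le (by linarith), ← integral_Ico_eq_integral_Ioc,
    setIntegral_congr_fun measurableSet_Ico (eqOn_comp_natFloor_Ico φ k), setIntegral_const,
    Real.volume_real_Ico]
  simp

theorem integral_Ioi_comp_natFloor [NormedSpace ℝ E] [CompleteSpace E] (φ : ℕ → E) {M : ℕ}
    (hφ : ∀ k, M ≤ k → φ k = 0) :
    ∫ x in Ioi (0 : ℝ), φ ⌊x⌋₊ = ∑ k ∈ Finset.range M, φ k := by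
  have hvanish : ∀ x ∈ Ioi (0 : ℝ) \ Ioo 0 M, φ ⌊x⌋₊ = 0 := fun x ⟨hx, hxM⟩ =>
    hφ _ (Nat.le_floor (le_of_not_gt fun h => hxM ⟨hx, h⟩))
  rw [setIntegral_eq_of_subset_of_forall_sdiff_eq_zero measurableSet_Ioi Ioo_subset_Ioi_self
    hvanish, ← integral_Ioc_eq_integral_Ioo, ← intervalIntegral.integral_of_le (Nat.cast_nonneg M)]
  have hsum := intervalIntegral.sum_integral_adjacent_intervals (a := fun k : ℕ => (k : ℝ))
    (f := fun x => φ ⌊x⌋₊) (μ := volume) (n := M)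
    (fun k _ => by simpa using intervalIntegrable_comp_natFloor φ k)
  simp only [Nat.cast_zero, Nat.cast_succ] at hsum
  rw [← hsum]
  exact Finset.sum_congr rfl fun k _ => intervalIntegral_comp_natFloor φ k

end StepFunction

section Capacity

variable {Ω : Type*} [MeasurableSpace Ω] {c : Set Ω → ℝ}

theorem choquet_of_nonneg (hc_univ : c univ = 1) {X : Ω → ℝ} (hX : ∀ ω, 0 ≤ X ω) :
    choquet c X = ∫ x in Ioi (0 : ℝ), c {ω | x < X ω} := by
  have hneg : EqOn (fun x => c {ω | x < X ω} - 1) (fun _ => 0) (Iio 0) := fun x hx => by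
    have hall : {ω | x < X ω} = univ := eq_univ_of_forall fun ω => (mem_Iio.1 hx).trans_le (hX ω)
    simp [hall, hc_univ]
  rw [choquet, setIntegral_congr_fun measurableSet_Iio hneg, integral_zero, zero_add]

theorem choquet_natCast_eq_sum (hc_empty : c ∅ = 0) (hc_univ : c univ = 1) {f : Ω → ℕ} {M : ℕ}
    (hfM : ∀ ω, f ω ≤ M) :
    choquet c (fun ω => (f ω : ℝ)) = ∑ k ∈ Finset.range M, c {ω | k < f ω} := by
  rw [choquet_of_nonneg hc_univ fun ω => Nat.cast_nonneg _,
    ← integral_Ioi_comp_natFloor (fun k => c {ω | k < f ω}) fun k hk => ?_]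
  · refine setIntegral_congr_fun measurableSet_Ioi fun x hx => ?_
    simp only [Nat.floor_lt (le_of_lt (mem_Ioi.1 hx))]
  · have hnone : {ω | k < f ω} = ∅ :=
      eq_empty_of_forall_notMem fun ω (h : k < f ω) => (hfM ω).not_gt (hk.trans_lt h)
    simp [hnone, hc_empty]

end Capacity

section Submodular

variable {Ω : Type*} [MeasurableSpace Ω] {c : Set Ω → ℝ}

theorem sum_submodular_antitone_le
    (hc_submod : ∀ A B : Set Ω, MeasurableSet A → MeasurableSet B →
        c (A ∪ B) + c (A ∩ B) ≤ c A + c B)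
    {S : ℕ → Set Ω} (hS : ∀ k, MeasurableSet (S k)) (hS_anti : Antitone S)
    {B : Set Ω} (hB : MeasurableSet B) (n : ℕ) :
    ∑ k ∈ Finset.range n, c (S (k + 1) ∪ (S k ∩ B)) ≤
      ∑ k ∈ Finset.range n, c (S (k + 1)) + (c (S 0 ∩ B) - c (S n ∩ B)) := by
  have hterm : ∀ k, c (S (k + 1) ∪ (S k ∩ B)) ≤
      c (S (k + 1)) + (c (S k ∩ B) - c (S (k + 1) ∩ B)) := fun k => by
    have hinter : S (k + 1) ∩ (S k ∩ B) = S (k + 1) ∩ B := by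
      rw [← inter_assoc, inter_eq_left.2 (hS_anti k.le_succ)]
    have := hc_submod _ _ (hS (k + 1)) ((hS k).inter hB)
    rw [hinter] at this
    linarith
  calc ∑ k ∈ Finset.range n, c (S (k + 1) ∪ (S k ∩ B))
      ≤ ∑ k ∈ Finset.range n, (c (S (k + 1)) + (c (S k ∩ B) - c (S (k + 1) ∩ B))) :=
        Finset.sum_le_sum fun k _ => hterm k
    _ = _ := by rw [Finset.sum_add_distrib, Finset.sum_range_sub' (fun k => c (S k ∩ B))]

theorem sum_levelSets_add_indicator_le (hc_empty : c ∅ = 0)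
    (hc_submod : ∀ A B : Set Ω, MeasurableSet A → MeasurableSet B →
        c (A ∪ B) + c (A ∩ B) ≤ c A + c B)
    {h : Ω → ℕ} (hh : Measurable h) {K : ℕ} (hK : ∀ ω, h ω ≤ K)
    {B : Set Ω} (hB : MeasurableSet B) :
    ∑ k ∈ Finset.range (K + 1), c {ω | k < h ω + B.indicator 1 ω} ≤
      ∑ k ∈ Finset.range K, c {ω | k < h ω} + c B := by
  have hlevel : ∀ k : ℕ, {ω | k < h ω + B.indicator 1 ω} =
      {ω | k + 1 ≤ h ω} ∪ ({ω | k ≤ h ω} ∩ B) := fun k => by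
    ext ω
    by_cases hω : ω ∈ B <;> simp [hω]
    omega
  have hchain := sum_submodular_antitone_le hc_submod (S := fun k => {ω | k ≤ h ω})
    (fun k => hh measurableSet_Ici) (fun i j hij ω hω => hij.trans hω) hB (K + 1)
  have htop : {ω | K + 1 ≤ h ω} = ∅ :=
    eq_empty_of_forall_notMem fun ω (hω : K + 1 ≤ h ω) => by have := hK ω; omega
  have hfirst : {ω | 0 ≤ h ω} ∩ B = B := by simp
  simp only [hlevel]
  refine hchain.trans_eq ?_
  rw [hfirst, htop, empty_inter, hc_empty, sub_zero, Finset.sum_range_succ, htop, hc_empty,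
    add_zero]
  simp only [Nat.add_one_le_iff]

theorem sum_levelSets_add_le (hc_empty : c ∅ = 0)
    (hc_submod : ∀ A B : Set Ω, MeasurableSet A → MeasurableSet B →
        c (A ∪ B) + c (A ∩ B) ≤ c A + c B)
    {f : Ω → ℕ} (hf : Measurable f) {M : ℕ} (hfM : ∀ ω, f ω ≤ M)
    {g : Ω → ℕ} (hg : Measurable g) {N : ℕ} (hgN : ∀ ω, g ω ≤ N) :
    ∑ k ∈ Finset.range (M + N), c {ω | k < f ω + g ω} ≤
      ∑ k ∈ Finset.range M, c {ω | k < f ω} + ∑ k ∈ Finset.range N, c {ω | k < g ω} := by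
  induction N generalizing g with
  | zero => simp [nonpos_iff_eq_zero.1 (hgN _)]
  | succ N ih =>
    set B := {ω | 0 < g ω}
    have hsplit : ∀ ω, f ω + g ω = f ω + (g ω - 1) + B.indicator 1 ω := fun ω => by
      by_cases hω : 0 < g ω
      · rw [indicator_of_mem (s := B) hω, Pi.one_apply]; omega
      · rw [indicator_of_notMem (s := B) hω]; omega
    have hbound : ∀ ω, f ω + (g ω - 1) ≤ M + N := fun ω => by
      have := hfM ω; have := hgN ω; omega
    have hpred : ∀ k : ℕ, {ω | k < g ω - 1} = {ω | k + 1 < g ω} := fun k =>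
      Set.ext fun ω => show k < g ω - 1 ↔ k + 1 < g ω by omega
    calc ∑ k ∈ Finset.range (M + (N + 1)), c {ω | k < f ω + g ω}
        ≤ ∑ k ∈ Finset.range (M + N), c {ω | k < f ω + (g ω - 1)} + c B := by
          simp only [hsplit]
          exact sum_levelSets_add_indicator_le hc_empty hc_submod
            (hf.add (hg.sub measurable_const)) hbound (hg measurableSet_Ioi)
      _ ≤ ∑ k ∈ Finset.range M, c {ω | k < f ω} +
            ∑ k ∈ Finset.range N, c {ω | k < g ω - 1} + c B := by
          gcongr
          exact ih (hg.sub measurable_const) fun ω => by have := hgN ω; omega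
      _ = _ := by
          rw [Finset.sum_range_succ' _ N, add_assoc]
          simp only [hpred, B]

end Submodular

theorem choquet_subadditive_of_range_pow_two_general {Ω : Type*} [MeasurableSpace Ω]
    (c : Set Ω → ℝ)
    (hc_empty : c ∅ = 0) (hc_univ : c Set.univ = 1)
    (hc_submod : ∀ A B : Set Ω, MeasurableSet A → MeasurableSet B →
        c (A ∪ B) + c (A ∩ B) ≤ c A + c B)
    (p : ℕ) (X Y : Ω → ℝ) (hX : Measurable X) (hY : Measurable Y)
    (hXr : ∀ ω, ∃ n : ℕ, n ≤ 2 ^ p ∧ X ω = n)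
    (hYr : ∀ ω, ∃ n : ℕ, n ≤ 2 ^ p ∧ Y ω = n) :
    choquet c (fun ω => X ω + Y ω) ≤ choquet c X + choquet c Y := by
  choose f hfM hXf using hXr
  choose g hgM hYg using hYr
  obtain rfl : X = fun ω => (f ω : ℝ) := funext hXf
  obtain rfl : Y = fun ω => (g ω : ℝ) := funext hYg
  have hf : Measurable f := by simpa [Function.comp_def] using Nat.measurable_floor.comp hX
  have hg : Measurable g := by simpa [Function.comp_def] using Nat.measurable_floor.comp hY
  simp only [← Nat.cast_add]
  rw [choquet_natCast_eq_sum hc_empty hc_univ fun ω => add_le_add (hfM ω) (hgM ω),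
    choquet_natCast_eq_sum hc_empty hc_univ hfM, choquet_natCast_eq_sum hc_empty hc_univ hgM]
  exact sum_levelSets_add_le hc_empty hc_submod hf hfM hg hgM

/-- For `c` submodular and `X, Y` measurable with values in `{0, 1, …, 2^p}`, the
Choquet integral is subadditive. -/
theorem choquet_subadditive_of_range_pow_two {Ω : Type*} [MeasurableSpace Ω]
    (c : Set Ω → ℝ)
    (hc_mono : ∀ ⦃A B : Set Ω⦄, MeasurableSet A → MeasurableSet B → A ⊆ B → c A ≤ c B)
    (hc_range : ∀ A : Set Ω, MeasurableSet A → c A ∈ Set.Icc (0 : ℝ) 1)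
    (hc_empty : c ∅ = 0) (hc_univ : c Set.univ = 1)
    (hc_submod : ∀ A B : Set Ω, MeasurableSet A → MeasurableSet B →
        c (A ∪ B) + c (A ∩ B) ≤ c A + c B)
    (p : ℕ) (X Y : Ω → ℝ) (hX : Measurable X) (hY : Measurable Y)
    (hXr : ∀ ω, ∃ n : ℕ, n ≤ 2 ^ p ∧ X ω = n)
    (hYr : ∀ ω, ∃ n : ℕ, n ≤ 2 ^ p ∧ Y ω = n) :
    choquet c (fun ω => X ω + Y ω) ≤ choquet c X + choquet c Y :=
  choquet_subadditive_of_range_pow_two_general c hc_empty hc_univ hc_submod p X Y hX hY hXr hYr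
end
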